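/- For all integers k ≥ 0 and j ≥ 1, one has S_{k,j}(1) = P_k(j) · g_j, where P_k(j) denotes the evaluation of the polynomial P_k at x = j. -/
import Mathlib


open Polynomial

/-- The Tuenter polynomials: `P 0 = 1`, `P (k+1) (x) = x^2 (P k (x) - P k (x-1)) + x P k (x-1)`. -/
noncomputable def P : ℕ → Polynomial ℚ
  | 0 => 1
  | k + 1 =>
      X ^ 2 * (P k - (P k).comp (X - Polynomial.C 1)) + X * (P k).comp (X - Polynomial.C 1)

/-- `S k j` is the sum `S_{k,j}(1) = ∑_{q=0}^{j-1} binom(2j, q) (j-q)^{2k+1}`. -/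
def S (k j : ℕ) : ℕ :=
  ∑ q ∈ Finset.range j, Nat.choose (2 * j) q * (j - q) ^ (2 * k + 1)

/-- `g j = (j/(j-1)!) ∏_{q=1}^{j-1} (j+q)` as a rational number; `g 1 = 1`. -/
def g (j : ℕ) : ℚ :=
  (j : ℚ) / (Nat.factorial (j - 1) : ℚ) * ∏ q ∈ Finset.Icc 1 (j - 1), ((j : ℚ) + (q : ℚ))


lemma Scast (k j : ℕ) : (S k j : ℚ) =
    ∑ q ∈ Finset.range j, (Nat.choose (2 * j) q : ℚ) * ((j : ℚ) - q) ^ (2 * k + 1) := by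
  unfold S
  push_cast
  refine Finset.sum_congr rfl fun q hq => ?_
  have hq' : q ≤ j := le_of_lt (Finset.mem_range.mp hq)
  push_cast [Nat.cast_sub hq']
  ring

lemma fact_prod (n m : ℕ) :
    Nat.factorial (n + m) = Nat.factorial n * ∏ i ∈ Finset.range m, (n + 1 + i) := by
  induction m with
  | zero => simp
  | succ m ih =>
    rw [Finset.prod_range_succ, ← mul_assoc, ← ih]
    rw [show n + (m+1) = (n + m) + 1 by ring, Nat.factorial_succ]
    ring

lemma gval (m : ℕ) : g (m + 1) = ((m : ℚ) + 1) * (Nat.choose (2 * m + 1) m : ℚ) := by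
  unfold g
  simp only [Nat.add_sub_cancel]
  have h1 : Finset.Icc 1 m = Finset.Ico 1 (m + 1) := by rw [Finset.Ico_add_one_right_eq_Icc]
  have h2 : ∏ q ∈ Finset.Icc 1 m, (((m:ℚ) + 1) + q)
      = ((∏ i ∈ Finset.range m, ((m + 1) + 1 + i) : ℕ) : ℚ) := by
    rw [h1, Finset.prod_Ico_eq_prod_range]
    push_cast
    refine Finset.prod_congr rfl fun i _ => by ring
  have h3 : Nat.factorial (2 * m + 1) = Nat.factorial (m + 1) * ∏ i ∈ Finset.range m, ((m + 1) + 1 + i) := by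
    rw [← fact_prod]; congr 1; ring
  have h4 : (Nat.choose (2 * m + 1) m) * Nat.factorial m * Nat.factorial (m + 1) = Nat.factorial (2 * m + 1) := by
    have := Nat.choose_mul_factorial_mul_factorial (n := 2 * m + 1) (k := m) (by omega)
    rw [show 2 * m + 1 - m = m + 1 by omega] at this
    exact this
  push_cast at h2 ⊢
  rw [h2]
  have hfm : (Nat.factorial m : ℚ) ≠ 0 := by positivity
  have hfm1 : (Nat.factorial (m+1) : ℚ) ≠ 0 := by positivity
  have h3q : ((Nat.factorial (2 * m + 1) : ℚ)) = (Nat.factorial (m + 1) : ℚ) * ((∏ i ∈ Finset.range m, ((m + 1) + 1 + i) : ℕ) : ℚ) := by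
    exact_mod_cast congrArg (Nat.cast : ℕ → ℚ) h3
  have h4q : ((Nat.choose (2 * m + 1) m : ℚ)) * (Nat.factorial m : ℚ) * (Nat.factorial (m + 1) : ℚ) = (Nat.factorial (2 * m + 1) : ℚ) := by
    exact_mod_cast congrArg (Nat.cast : ℕ → ℚ) h4
  push_cast at h3q h4q
  have key : ((2 * m + 1).choose m : ℚ) * (Nat.factorial m : ℚ) = ∏ x ∈ Finset.range m, ((m:ℚ) + 1 + 1 + x) := by
    apply mul_right_cancel₀ hfm1
    rw [h4q, h3q]; ring
  field_simp
  rw [← key]; ring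

lemma S0 (m : ℕ) : (S 0 (m + 1) : ℚ) = g (m + 1) := by
  rw [Scast, gval]
  push_cast
  set f : ℕ → ℚ := fun r => if r = 0 then 0 else (Nat.choose (2 * m + 1) (r - 1) : ℚ) with hf
  have hterm : ∀ q ∈ Finset.range (m + 1),
      (Nat.choose (2 * m + 2) q : ℚ) * (((m:ℚ) + 1) - q) ^ (2 * 0 + 1)
      = ((m:ℚ) + 1) * (f (q + 1) - f q) := by
    intro q hq
    have hq' : q < m + 1 := Finset.mem_range.mp hq
    match q with
    | 0 => simp [hf]
    | r + 1 =>
      have hr : r < m := by omega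
      simp only [hf, if_neg (Nat.succ_ne_zero _), Nat.add_sub_cancel, pow_one]
      have h1 : (2 * m + 2) * Nat.choose (2 * m + 1) r = Nat.choose (2 * m + 2) (r + 1) * (r + 1) := by
        have := Nat.add_one_mul_choose_eq (2 * m + 1) r
        simpa using this
      have h2 : Nat.choose (2 * m + 1) (r + 1) * (2 * m + 2) = Nat.choose (2 * m + 2) (r + 1) * (2 * m + 2 - (r + 1)) := by
        have := Nat.choose_mul_succ_eq (2 * m + 1) (r + 1)
        simpa using this
      have h1q : ((2:ℚ) * m + 2) * (Nat.choose (2 * m + 1) r : ℚ)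
          = (Nat.choose (2 * m + 2) (r + 1) : ℚ) * ((r:ℚ) + 1) := by exact_mod_cast h1
      have h2q := congrArg (Nat.cast : ℕ → ℚ) h2
      push_cast [Nat.cast_sub (show r ≤ 2 * m + 1 by omega)] at h2q
      push_cast
      linear_combination (h1q - h2q) / 2
  have hsum : ∀ q ∈ Finset.range (m + 1),
      ((2 * (m + 1)).choose q : ℚ) * (((m:ℚ) + 1) - q) ^ (2 * 0 + 1)
      = ((m:ℚ) + 1) * (f (q + 1) - f q) := by
    intro q hq
    rw [show 2 * (m + 1) = 2 * m + 2 by ring]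
    exact hterm q hq
  rw [Finset.sum_congr rfl hsum, ← Finset.mul_sum, Finset.sum_range_sub f (m + 1)]
  simp [hf]

lemma Srec (k m : ℕ) : (S (k + 1) (m + 1) : ℚ) =
    ((m:ℚ) + 1) ^ 2 * (S k (m + 1) : ℚ) - 2 * ((m:ℚ) + 1) * (2 * (m:ℚ) + 1) * (S k m : ℚ) := by
  have key : ((m:ℚ) + 1) ^ 2 * (S k (m + 1) : ℚ) - (S (k + 1) (m + 1) : ℚ)
      = 2 * ((m:ℚ) + 1) * (2 * (m:ℚ) + 1) * (S k m : ℚ) := by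
    rw [Scast, Scast, Scast, Finset.mul_sum, ← Finset.sum_sub_distrib, Finset.sum_range_succ']
    push_cast
    have hterm : ∀ r ∈ Finset.range m,
        (((m:ℚ) + 1) ^ 2 * (((2 * (m + 1)).choose (r+1) : ℚ) * (((m:ℚ) + 1) - ((r:ℚ)+1)) ^ (2 * k + 1))
          - ((2 * (m + 1)).choose (r+1) : ℚ) * (((m:ℚ) + 1) - ((r:ℚ)+1)) ^ (2 * (k + 1) + 1))
        = 2 * ((m:ℚ) + 1) * (2 * (m:ℚ) + 1) * (((2 * m).choose r : ℚ) * (((m:ℚ)) - r) ^ (2 * k + 1)) := by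
      intro r hr
      have hr' : r < m := Finset.mem_range.mp hr
      have h1 : (2 * m + 2) * Nat.choose (2 * m + 1) r = Nat.choose (2 * m + 2) (r + 1) * (r + 1) := by
        have := Nat.add_one_mul_choose_eq (2 * m + 1) r
        simpa using this
      have h2 : Nat.choose (2 * m) r * (2 * m + 1) = Nat.choose (2 * m + 1) r * (2 * m + 1 - r) := by
        have := Nat.choose_mul_succ_eq (2 * m) r
        simpa using this
      have h1q : ((2:ℚ) * m + 2) * (Nat.choose (2 * m + 1) r : ℚ)
          = (Nat.choose (2 * m + 2) (r + 1) : ℚ) * ((r:ℚ) + 1) := by exact_mod_cast h1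
      have h2q := congrArg (Nat.cast : ℕ → ℚ) h2
      push_cast [Nat.cast_sub (show r ≤ 2 * m + 1 by omega)] at h2q
      have hA : ((2 * (m + 1)).choose (r + 1) : ℚ) = ((2 * m + 2).choose (r + 1) : ℚ) := by
        rw [show 2 * (m + 1) = 2 * m + 2 by ring]
      rw [hA]
      have hx : (((m:ℚ) + 1) - ((r:ℚ)+1)) = ((m:ℚ) - r) := by ring
      rw [hx]
      have hpow : ((m:ℚ) - r) ^ (2 * (k + 1) + 1) = ((m:ℚ) - r) ^ (2 * k + 1) * ((m:ℚ) - r)^2 := by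
        rw [← pow_add]; congr 1
      rw [hpow]
      set X := ((m:ℚ) - r) ^ (2 * k + 1)
      linear_combination (-X * ((2 * m + 1 : ℚ) - r) * h1q - X * (2 * (m:ℚ) + 2) * h2q)
    rw [Finset.sum_congr rfl hterm, ← Finset.mul_sum]
    simp only [Nat.choose_zero_right, Nat.cast_one, one_mul, sub_zero]
    rw [show ((m:ℚ)+1) ^ (2 * (k + 1) + 1) = ((m:ℚ)+1) ^ (2 * k + 1) * ((m:ℚ)+1)^2 by
      rw [← pow_add]; congr 1]
    ring
  linarith [key]

lemma g_zero : g 0 = 0 := by simp [g]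

lemma Grel (m : ℕ) : (((m:ℚ) + 1) ^ 2 - ((m:ℚ) + 1)) * g (m + 1)
    = 2 * ((m:ℚ) + 1) * (2 * (m:ℚ) + 1) * g m := by
  match m with
  | 0 => norm_num [g_zero, gval]
  | n + 1 =>
    rw [gval, gval]
    push_cast
    -- need: (n+2) * C(2n+3, n+1) = 2 * (2n+3) * C(2n+1, n)
    have h1 : Nat.choose (2 * n + 3) (n + 1) * Nat.factorial (n + 1) * Nat.factorial (n + 2)
        = Nat.factorial (2 * n + 3) := by
      have := Nat.choose_mul_factorial_mul_factorial (n := 2 * n + 3) (k := n + 1) (by omega)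
      rw [show 2 * n + 3 - (n + 1) = n + 2 by omega] at this
      exact this
    have h2 : Nat.choose (2 * n + 1) n * Nat.factorial n * Nat.factorial (n + 1)
        = Nat.factorial (2 * n + 1) := by
      have := Nat.choose_mul_factorial_mul_factorial (n := 2 * n + 1) (k := n) (by omega)
      rw [show 2 * n + 1 - n = n + 1 by omega] at this
      exact this
    have key : ((n:ℚ) + 2) * (Nat.choose (2 * n + 3) (n + 1) : ℚ)
        = 2 * (2 * (n:ℚ) + 3) * (Nat.choose (2 * n + 1) n : ℚ) := by
      have h1q : (Nat.choose (2 * n + 3) (n + 1) : ℚ) * (Nat.factorial (n + 1) : ℚ) * (Nat.factorial (n + 2) : ℚ)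
          = (Nat.factorial (2 * n + 3) : ℚ) := by exact_mod_cast h1
      have h2q : (Nat.choose (2 * n + 1) n : ℚ) * (Nat.factorial n : ℚ) * (Nat.factorial (n + 1) : ℚ)
          = (Nat.factorial (2 * n + 1) : ℚ) := by exact_mod_cast h2
      have e1 : (Nat.factorial (2 * n + 3) : ℚ) = ((2:ℚ) * n + 3) * ((2:ℚ) * n + 2) * (Nat.factorial (2 * n + 1) : ℚ) := by
        rw [show 2 * n + 3 = (2 * n + 1) + 1 + 1 by omega]
        push_cast [Nat.factorial_succ]
        ring
      have e2 : (Nat.factorial (n + 2) : ℚ) = ((n:ℚ) + 2) * (Nat.factorial (n + 1) : ℚ) := by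
        push_cast [Nat.factorial_succ]; ring
      have e3 : (Nat.factorial (n + 1) : ℚ) = ((n:ℚ) + 1) * (Nat.factorial n : ℚ) := by
        push_cast [Nat.factorial_succ]; ring
      have hf : (Nat.factorial n : ℚ) ≠ 0 := by positivity
      have hf1 : (Nat.factorial (n + 1) : ℚ) ≠ 0 := by positivity
      rw [e1, ← h2q] at h1q
      rw [e2, e3] at h1q
      have hn1 : ((n:ℚ) + 1) ≠ 0 := by positivity
      have hne : ((n:ℚ)+1) * (Nat.factorial n : ℚ) * (((n:ℚ)+1) * (Nat.factorial n : ℚ)) ≠ 0 := by positivity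
      apply mul_right_cancel₀ hne
      linear_combination h1q
    rw [show 2*(n+1)+1 = 2*n+3 by ring]
    linear_combination ((n:ℚ)+1)*((n:ℚ)+2)*key

lemma main_aux (k j : ℕ) : (S k j : ℚ) = (P k).eval (j : ℚ) * g j := by
  induction k generalizing j with
  | zero =>
    match j with
    | 0 => simp [S, g_zero]
    | m + 1 => simpa [P] using S0 m
  | succ k ih =>
    match j with
    | 0 => simp [S, g_zero]
    | m + 1 =>
      have hrec := Srec k m
      have hg := Grel m
      have ih1 := ih (m + 1)
      have ih0 := ih m
      have hP : (P (k + 1)).eval ((m : ℚ) + 1)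
          = ((m:ℚ) + 1) ^ 2 * ((P k).eval ((m:ℚ) + 1) - (P k).eval ((m:ℚ))) + ((m:ℚ) + 1) * (P k).eval ((m:ℚ)) := by
        simp [P, eval_comp]
      push_cast at ih1 ih0 ⊢
      rw [hP, hrec, ih1, ih0]
      linear_combination ((P k).eval ((m:ℚ))) * hg

theorem S_eq_P_mul_g (k j : ℕ) (hj : 1 ≤ j) :
    (S k j : ℚ) = (P k).eval (j : ℚ) * g j := by
  exact main_aux k j
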